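/- Fix n ≥ 2 and degree D. Define p_D(x) = Σ_{|α|=D} γ(α) x^α where γ(α) = n−1 if some α_k = 0, γ(α) = n−1 if all α_k ≥ 1 and Σ_{k=1}^{n−1} k·α_k − D ≡ 0 (mod n), and γ(α) = −1 otherwise. Then p_D(x)·(x₁+⋯+xₙ) has only nonnegative coefficients. -/

import Mathlib

/-!
The coefficient of `x^m` in `p * (X 0 + ⋯ + X (n-1))` is `∑_{m_i ≠ 0} γ (m - e_i)`, and only
`|m| = D + 1` matters. If some `m_j = 0`, every `m - e_i` still has a zero entry, so every term is
`n - 1 ≥ 0`. Otherwise the coordinate weights `1, 2, …, n - 1, 0` run over all residues mod `n`, so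
for a suitable `i₀` removing `e_{i₀}` shifts the weighted degree into the class of `D`; that term is
`n - 1` and outweighs the other `n - 1` terms, each of which is at least `-1`.
-/

open MvPolynomial Finsupp

theorem MvPolynomial.coeff_mul_sum_X {R σ : Type*} [CommSemiring R] [Fintype σ]
    (p : MvPolynomial σ R) (m : σ →₀ ℕ) :
    (p * ∑ i, X i).coeff m = ∑ i ∈ m.support, p.coeff (m - single i 1) := by
  classical
  simp only [Finset.mul_sum, coeff_sum, coeff_mul_X', Finset.sum_ite_mem, Finset.univ_inter]

theorem Finsupp.degree_sub_single_one_add {σ : Type*} {m : σ →₀ ℕ} {i : σ} (hi : m i ≠ 0) :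
    degree (m - single i 1) + 1 = degree m := by
  simpa [degree_eq_weight_one] using weight_sub_single_add (w := fun _ ↦ (1 : ℕ)) hi

theorem Finset.sum_nonneg_of_neg_one_le {ι R : Type*} [CommRing R] [LinearOrder R]
    [IsStrictOrderedRing R] {s : Finset ι} {f : ι → R} (hf : ∀ i ∈ s, -1 ≤ f i) {i₀ : ι}
    (hi₀ : i₀ ∈ s) (hfi₀ : (s.card : R) - 1 ≤ f i₀) : 0 ≤ ∑ i ∈ s, f i := by
  classical
  have hrest : -((s.card : R) - 1) ≤ ∑ i ∈ s.erase i₀, f i := by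
    have := card_nsmul_le_sum (s.erase i₀) f (-1) fun i hi ↦ hf i (mem_of_mem_erase hi)
    rw [card_erase_of_mem hi₀, nsmul_eq_mul, Nat.cast_pred (card_pos.2 ⟨i₀, hi₀⟩)] at this
    linarith
  rw [← add_sum_erase s f hi₀]
  linarith

theorem sum_nonneg_of_weight_covers_residues {σ : Type*} [Fintype σ] {N : ℤ} {D : ℕ}
    (w : σ → ℕ) (hw : ∀ t : ℤ, ∃ k, N ∣ t - w k) {γ : (σ →₀ ℕ) → ℝ} (hγ : ∀ α, -1 ≤ γ α)
    (hγD : ∀ α, N ∣ weight w α - D → (Fintype.card σ : ℝ) - 1 ≤ γ α) {m : σ →₀ ℕ}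
    (hm : ∀ j, m j ≠ 0) : 0 ≤ ∑ i ∈ m.support, γ (m - single i 1) := by
  have hsupp : m.support = Finset.univ :=
    Finset.eq_univ_of_forall fun j ↦ mem_support_iff.2 (hm j)
  obtain ⟨i₀, hi₀⟩ := hw (weight w m - D)
  refine Finset.sum_nonneg_of_neg_one_le (fun i _ ↦ hγ _) (mem_support_iff.2 (hm i₀)) ?_
  rw [hsupp, Finset.card_univ]
  refine hγD _ ?_
  rw [← weight_sub_single_add (hm i₀)] at hi₀
  push_cast at hi₀
  convert hi₀ using 1
  ring

-- The paper weights `x_k` by `k` for `k < n` and `x_n` by `0`; here `x_k` is `X (k - 1)`.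
def cyclicWeight (n : ℕ) (k : Fin n) : ℕ := if (k : ℕ) < n - 1 then k + 1 else 0

theorem weight_cyclicWeight {n : ℕ} (α : Fin n →₀ ℕ) :
    weight (cyclicWeight n) α =
      ∑ k : Fin n, (if (k : ℕ) < n - 1 then (k : ℕ) + 1 else 0) * α k := by
  simp [weight_eq_sum, cyclicWeight, mul_comm]

theorem exists_cyclicWeight_dvd_sub {n : ℕ} (hn : 0 < n) (t : ℤ) :
    ∃ k : Fin n, (n : ℤ) ∣ t - cyclicWeight n k := by
  have hr : 0 ≤ t % n := Int.emod_nonneg t (by omega)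
  have hrn : t % n < n := Int.emod_lt_of_pos t (by omega)
  rcases eq_or_ne (t % n) 0 with h | h
  · refine ⟨⟨n - 1, by omega⟩, ?_⟩
    simpa [cyclicWeight] using Int.dvd_of_emod_eq_zero h
  · refine ⟨⟨(t % n).toNat - 1, by omega⟩, ?_⟩
    have hk : cyclicWeight n ⟨(t % n).toNat - 1, by omega⟩ = (t % n).toNat := by
      rw [cyclicWeight, if_pos (show (t % n).toNat - 1 < n - 1 by omega)]
      show (t % n).toNat - 1 + 1 = _
      omega
    rw [hk, Int.toNat_of_nonneg hr]
    exact Int.dvd_self_sub_emod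

theorem stmt6 (n D : ℕ) (hn : 2 ≤ n) (γ : (Fin n →₀ ℕ) → ℝ)
    (hγ0 : ∀ α : Fin n →₀ ℕ, (∃ k, α k = 0) → γ α = (n : ℝ) - 1)
    (hγ1 : ∀ α : Fin n →₀ ℕ, (∀ k, 1 ≤ α k) →
      (((∑ k : Fin n, (if (k : ℕ) < n - 1 then (k : ℕ) + 1 else 0) * α k : ℕ) : ℤ) - (D : ℤ)) % (n : ℤ) = 0 →
      γ α = (n : ℝ) - 1)
    (hγ2 : ∀ α : Fin n →₀ ℕ, (∀ k, 1 ≤ α k) →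
      ¬ ((((∑ k : Fin n, (if (k : ℕ) < n - 1 then (k : ℕ) + 1 else 0) * α k : ℕ) : ℤ) - (D : ℤ)) % (n : ℤ) = 0) →
      γ α = -1)
    (p : MvPolynomial (Fin n) ℝ)
    (hp : ∀ α : Fin n →₀ ℕ, p.coeff α = if (α.sum fun _ e => e) = D then γ α else 0) :
    ∀ m : Fin n →₀ ℕ, 0 ≤ (p * ∑ i, X i).coeff m := by
  intro m
  simp only [← weight_cyclicWeight] at hγ1 hγ2
  have hn1 : (1 : ℝ) ≤ n := by exact_mod_cast (by omega : 1 ≤ n)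
  have hγ_ge : ∀ α, -1 ≤ γ α := by
    intro α
    by_cases h0 : ∃ k, α k = 0
    · rw [hγ0 α h0]; linarith
    push Not at h0
    by_cases hα : ((weight (cyclicWeight n) α : ℤ) - D) % n = 0
    · rw [hγ1 α (fun k ↦ Nat.one_le_iff_ne_zero.2 (h0 k)) hα]; linarith
    · rw [hγ2 α (fun k ↦ Nat.one_le_iff_ne_zero.2 (h0 k)) hα]
  have hγ_good : ∀ α, (n : ℤ) ∣ weight (cyclicWeight n) α - D → γ α = n - 1 := by
    intro α hα
    by_cases h0 : ∃ k, α k = 0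
    · exact hγ0 α h0
    push Not at h0
    exact hγ1 α (fun k ↦ Nat.one_le_iff_ne_zero.2 (h0 k)) (Int.emod_eq_zero_of_dvd hα)
  have hcoeff : ∀ i ∈ m.support,
      p.coeff (m - single i 1) = if degree m = D + 1 then γ (m - single i 1) else 0 := by
    intro i hi
    rw [hp, ← degree_sub_single_one_add (mem_support_iff.1 hi)]
    simp only [add_left_inj]
    rfl
  rw [coeff_mul_sum_X, Finset.sum_congr rfl hcoeff]
  split_ifs with hD
  · by_cases hz : ∃ j, m j = 0
    · obtain ⟨j, hj⟩ := hz
      refine Finset.sum_nonneg fun i _ ↦ ?_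
      rw [hγ0 _ ⟨j, by simp [hj]⟩]
      linarith
    push Not at hz
    refine sum_nonneg_of_weight_covers_residues (D := D) (cyclicWeight n)
      (exists_cyclicWeight_dvd_sub (by omega)) hγ_ge (fun α hα ↦ ?_) hz
    rw [Fintype.card_fin, hγ_good α hα]
  · simp
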